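/- arXiv:2312.17518 — 2 statements merged into one kernel-verified Lean document; each statement's English description precedes it below -/
import Mathlib

section
/- Let (C₁, C₂) be a CSS-T pair of binary codes of length n. Then (C₁, C₂) is maximal in C₁ (i.e., every binary code C₁′ with C₁ ⊆ C₁′ such that (C₁′, C₂) is a CSS-T pair satisfies C₁′ = C₁) if and only if C₁ = C₂^⊥ ∩ (C₁⋆C₂)^⊥. -/
open Finset

/-- The Euclidean dual of a binary code. -/
def dualCode {n : ℕ} (C : Submodule (ZMod 2) (Fin n → ZMod 2)) :
    Submodule (ZMod 2) (Fin n → ZMod 2) where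
  carrier := {x | ∀ c ∈ C, ∑ i, x i * c i = 0}
  add_mem' := by
    intro a b ha hb
    intro c hc
    have : ∑ i, (a + b) i * c i = ∑ i, (a i * c i + b i * c i) := by
      apply Finset.sum_congr rfl
      intro i _
      simp [add_mul]
    rw [this, Finset.sum_add_distrib, ha c hc, hb c hc, add_zero]
  zero_mem' := by
    intro c hc
    simp
  smul_mem' := by
    intro r a ha
    intro c hc
    have : ∑ i, (r • a) i * c i = r * ∑ i, a i * c i := by
      rw [Finset.mul_sum]
      apply Finset.sum_congr rfl
      intro i _
      simp [mul_assoc]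
    rw [this, ha c hc, mul_zero]

/-- The (componentwise) Schur product of two binary codes. -/
def schur {n : ℕ} (C D : Submodule (ZMod 2) (Fin n → ZMod 2)) :
    Submodule (ZMod 2) (Fin n → ZMod 2) :=
  Submodule.span (ZMod 2) {x | ∃ c ∈ C, ∃ d ∈ D, x = c * d}

/-- A pair of binary codes `(C₁, C₂)` is a CSS-T pair if `C₂ ⊆ C₁ ∩ (C₁^{⋆2})^⊥`. -/
def IsCSST {n : ℕ} (C₁ C₂ : Submodule (ZMod 2) (Fin n → ZMod 2)) : Prop :=
  C₂ ≤ C₁ ⊓ dualCode (schur C₁ C₁)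


section Aux
open Finset
variable {n : ℕ}

private def dot (x y : Fin n → ZMod 2) : ZMod 2 := ∑ i, x i * y i

private lemma dot_comm (x y : Fin n → ZMod 2) : dot x y = dot y x :=
  Finset.sum_congr rfl fun i _ => mul_comm _ _

private lemma dot_mul_right (x a b : Fin n → ZMod 2) : dot x (a * b) = dot (x * a) b :=
  Finset.sum_congr rfl fun i _ => by simp [mul_assoc]

private lemma dot_add_right (x a b : Fin n → ZMod 2) :
    dot x (a + b) = dot x a + dot x b := by
  unfold dot
  rw [← Finset.sum_add_distrib]
  exact Finset.sum_congr rfl fun i _ => by simp [mul_add]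

private lemma dot_smul_right (x : Fin n → ZMod 2) (r : ZMod 2) (a : Fin n → ZMod 2) :
    dot x (r • a) = r * dot x a := by
  unfold dot
  rw [Finset.mul_sum]
  exact Finset.sum_congr rfl fun i _ => by simp [Pi.smul_apply, smul_eq_mul]; ring

private lemma dot_zero_right (x : Fin n → ZMod 2) : dot x 0 = 0 := by simp [dot]

private lemma mul_self_eq2 (v : Fin n → ZMod 2) : v * v = v := by
  funext i
  have h2 : ∀ a : ZMod 2, a * a = a := by decide
  exact h2 (v i)

private lemma mem_dualCode {C : Submodule (ZMod 2) (Fin n → ZMod 2)} {x : Fin n → ZMod 2} :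
    x ∈ dualCode C ↔ ∀ c ∈ C, dot x c = 0 := Iff.rfl

private lemma mem_dual_schur {C D : Submodule (ZMod 2) (Fin n → ZMod 2)}
    {x : Fin n → ZMod 2} :
    x ∈ dualCode (schur C D) ↔ ∀ a ∈ C, ∀ b ∈ D, dot x (a * b) = 0 := by
  constructor
  · intro hx a ha b hb
    exact hx _ (Submodule.subset_span ⟨a, ha, b, hb, rfl⟩)
  · intro hx c hc
    induction hc using Submodule.span_induction with
    | mem y hy => obtain ⟨a, ha, b, hb, rfl⟩ := hy; exact hx a ha b hb
    | zero => exact dot_zero_right x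
    | add y z _ _ hy hz => show dot x (y + z) = 0; rw [dot_add_right, show dot x y = 0 from hy, show dot x z = 0 from hz, add_zero]
    | smul r y _ hy => show dot x (r • y) = 0; rw [dot_smul_right, show dot x y = 0 from hy, mul_zero]

private lemma aux_le (C C' C₂ : Submodule (ZMod 2) (Fin n → ZMod 2)) (hle : C ≤ C')
    (h : IsCSST C' C₂) : C' ≤ dualCode C₂ ⊓ dualCode (schur C C₂) := by
  intro x hx
  have h1 : C₂ ≤ C' := fun b hb => ((h hb).1)
  have h2 : ∀ b ∈ C₂, b ∈ dualCode (schur C' C') := fun b hb => (h hb).2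
  refine Submodule.mem_inf.2 ⟨?_, ?_⟩
  · intro c hc
    have key := mem_dual_schur.1 (h2 c hc) x hx c (h1 hc)
    calc dot x c = dot x (c * c) := by rw [mul_self_eq2]
      _ = dot (x * c) c := dot_mul_right _ _ _
      _ = dot c (x * c) := dot_comm _ _
      _ = 0 := key
  · rw [mem_dual_schur]
    intro a ha b hb
    have key := mem_dual_schur.1 (h2 b hb) x hx a (hle ha)
    rw [dot_mul_right, dot_comm]
    exact key

end Aux

theorem stmt_10 (n : ℕ) (C₁ C₂ : Submodule (ZMod 2) (Fin n → ZMod 2))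
    (h : IsCSST C₁ C₂) :
    (∀ C₁' : Submodule (ZMod 2) (Fin n → ZMod 2),
        C₁ ≤ C₁' → IsCSST C₁' C₂ → C₁' = C₁)
    ↔ C₁ = dualCode C₂ ⊓ dualCode (schur C₁ C₂) := by
  have htwo : ∀ t : ZMod 2, t = 0 ∨ t = 1 := by decide
  constructor
  · intro hmax
    refine le_antisymm (aux_le C₁ C₁ C₂ le_rfl h) ?_
    intro x hx
    obtain ⟨hx1, hx2⟩ := Submodule.mem_inf.1 hx
    set C' := C₁ ⊔ Submodule.span (ZMod 2) {x} with hC'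
    have hcsst : IsCSST C' C₂ := by
      intro b hb
      obtain ⟨hb1, hb2⟩ := Submodule.mem_inf.1 (h hb)
      refine Submodule.mem_inf.2 ⟨Submodule.mem_sup_left hb1, ?_⟩
      rw [mem_dual_schur]
      have H1 : ∀ a ∈ C₁, ∀ a' ∈ C₁, dot b (a * a') = 0 := fun a ha a' ha' =>
        mem_dual_schur.1 hb2 a ha a' ha'
      have H2 : ∀ a ∈ C₁, dot b (a * x) = 0 := by
        intro a ha
        have key := mem_dual_schur.1 hx2 a ha b hb
        calc dot b (a * x) = dot (b * a) x := dot_mul_right _ _ _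
          _ = dot x (b * a) := dot_comm _ _
          _ = dot x (a * b) := by rw [mul_comm b a]
          _ = 0 := key
      have H3 : dot b (x * x) = 0 := by
        rw [mul_self_eq2, dot_comm]
        exact hx1 b hb
      intro u hu v hv
      obtain ⟨a, ha, p, hp, rfl⟩ := Submodule.mem_sup.1 hu
      obtain ⟨a', ha', q, hq, rfl⟩ := Submodule.mem_sup.1 hv
      obtain ⟨r, rfl⟩ := Submodule.mem_span_singleton.1 hp
      obtain ⟨s, rfl⟩ := Submodule.mem_span_singleton.1 hq
      rcases htwo r with hr | hr <;> rcases htwo s with hs | hs <;> subst hr <;> subst hs <;>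
        simp only [zero_smul, one_smul, add_zero, mul_add, add_mul, dot_add_right]
      · exact H1 a ha a' ha'
      · rw [H1 a ha a' ha', H2 a ha, add_zero]
      · rw [H1 a ha a' ha', mul_comm x a', H2 a' ha', add_zero]
      · rw [H1 a ha a' ha', H2 a ha, mul_comm x a', H2 a' ha', H3]
        simp
    have heq := hmax C' le_sup_left hcsst
    have hxC' : x ∈ C' :=
      Submodule.mem_sup_right (Submodule.mem_span_singleton_self x)
    rwa [heq] at hxC'
  · intro hEq C₁' hle hcsst'
    refine le_antisymm ?_ hle
    exact le_trans (aux_le C₁ C₁' C₂ hle hcsst') hEq.ge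
end

section
/- Let C be a nonzero binary code of length n. Then the pair (C, C) is a maximal element of the poset 𝒫 of CSS-T pairs (i.e., (C, C) is a CSS-T pair and every CSS-T pair (D₁, D₂) with D₂ ≠ {0}, C ⊆ D₁ and C ⊆ D₂ satisfies D₁ = D₂ = C) if and only if C^{⋆2} = C^⊥. -/
open Finset

/-! Over `𝔽₂` every word is idempotent under the Schur product, so `C ⊆ C⋆C`, and the form
`(a, b, c) ↦ ∑ aᵢbᵢcᵢ` is symmetric, so that `A ⊥ B⋆C ↔ B ⊥ A⋆C`. The Schur product of codes is
the product of submodules of the algebra `Fin n → ZMod 2`.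

If `C⋆C = C^⊥`, then `(C⋆C)^⊥ = C`, and a CSS-T pair `(D₁, D₂)` above `(C, C)` has
`D₂ ⊆ (D₁⋆D₁)^⊥ ⊆ C`, and by symmetry `D₁ ⊆ (C⋆D₁)^⊥ ⊆ C`. Conversely, for `v ∈ (C⋆C)^⊥` the pair
`(C + ⟨v⟩, C)` is again CSS-T: `C ⊥ C⋆v` is `v ⊥ C⋆C`, and `v⋆v = v` is orthogonal to `C ⊆ C⋆C`.
Maximality then forces `v ∈ C`, i.e. `(C⋆C)^⊥ = C`. -/

open Matrix

section DotProduct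

variable {K ι : Type*} [CommRing K] [Fintype ι]

lemma dotProductBilin_nondegenerate [DecidableEq ι] :
    (dotProductBilin K K : LinearMap.BilinForm K (ι → K)).Nondegenerate :=
  ⟨fun x hx => funext fun i => by simpa using hx (Pi.single i 1),
   fun y hy => funext fun i => by simpa using hy (Pi.single i 1)⟩

lemma dotProductBilin_isRefl :
    LinearMap.BilinForm.IsRefl (dotProductBilin K K : LinearMap.BilinForm K (ι → K)) :=
  fun x y h => by simpa [dotProduct_comm] using h

lemma mul_dotProduct_comm (a b c : ι → K) : (a * b) ⬝ᵥ c = (c * b) ⬝ᵥ a := by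
  simp only [dotProduct, Pi.mul_apply]
  exact Finset.sum_congr rfl fun i _ => by ring

end DotProduct

section BinaryCode

variable {n : ℕ} {A B C : Submodule (ZMod 2) (Fin n → ZMod 2)}

lemma mem_dualCode_iff {x : Fin n → ZMod 2} : x ∈ dualCode C ↔ ∀ c ∈ C, x ⬝ᵥ c = 0 := Iff.rfl

lemma dualCode_eq_orthogonal (C : Submodule (ZMod 2) (Fin n → ZMod 2)) :
    dualCode C = LinearMap.BilinForm.orthogonal (dotProductBilin (ZMod 2) (ZMod 2)) C := by
  ext x
  simp [mem_dualCode_iff, LinearMap.BilinForm.mem_orthogonal_iff, dotProduct_comm x]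

lemma dualCode_dualCode (C : Submodule (ZMod 2) (Fin n → ZMod 2)) :
    dualCode (dualCode C) = C := by
  rw [dualCode_eq_orthogonal, dualCode_eq_orthogonal]
  exact LinearMap.BilinForm.orthogonal_orthogonal (dotProductBilin_nondegenerate (ι := Fin n))
    dotProductBilin_isRefl C

lemma dualCode_antitone (h : A ≤ B) : dualCode B ≤ dualCode A :=
  fun _ hx c hc => hx c (h hc)

lemma le_dualCode_comm : A ≤ dualCode B ↔ B ≤ dualCode A := by
  simp only [SetLike.le_def, mem_dualCode_iff]
  exact ⟨fun h b hb a ha => dotProduct_comm b a ▸ h ha b hb,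
   fun h a ha b hb => dotProduct_comm a b ▸ h hb a ha⟩

lemma le_dualCode_sup_iff : A ≤ dualCode (B ⊔ C) ↔ A ≤ dualCode B ∧ A ≤ dualCode C := by
  rw [le_dualCode_comm, sup_le_iff]
  exact and_congr le_dualCode_comm le_dualCode_comm

lemma schur_eq_mul (C D : Submodule (ZMod 2) (Fin n → ZMod 2)) : schur C D = C * D := by
  rw [Submodule.mul_eq_span_mul_set, schur]
  congr 1
  ext x
  simp [Set.mem_mul, eq_comm]

lemma le_dualCode_mul_comm : A ≤ dualCode (B * C) ↔ B ≤ dualCode (A * C) := by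
  rw [le_dualCode_comm, Submodule.mul_le, le_dualCode_comm, Submodule.mul_le]
  simp only [mem_dualCode_iff]
  exact ⟨fun h a ha c hc b hb => mul_dotProduct_comm b c a ▸ h b hb c hc a ha,
    fun h b hb c hc a ha => mul_dotProduct_comm a c b ▸ h a ha c hc b hb⟩

lemma mul_self_of_binary (x : Fin n → ZMod 2) : x * x = x :=
  funext fun i => by simp only [Pi.mul_apply]; generalize x i = a; fin_cases a <;> rfl

lemma self_le_mul_self (C : Submodule (ZMod 2) (Fin n → ZMod 2)) : C ≤ C * C :=
  fun x hx => mul_self_of_binary x ▸ Submodule.mul_mem_mul hx hx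

lemma span_singleton_mul_self (v : Fin n → ZMod 2) :
    Submodule.span (ZMod 2) {v} * Submodule.span (ZMod 2) {v} = Submodule.span (ZMod 2) {v} := by
  rw [Submodule.span_mul_span, Set.singleton_mul_singleton, mul_self_of_binary]

lemma isCSST_iff : IsCSST A B ↔ B ≤ A ∧ B ≤ dualCode (A * A) := by
  rw [IsCSST, le_inf_iff, schur_eq_mul]

lemma le_dualCode_mul_self_sup_span_singleton (hC : C ≤ dualCode (C * C)) {v : Fin n → ZMod 2}
    (hv : v ∈ dualCode (C * C)) :
    C ≤ dualCode ((C ⊔ Submodule.span (ZMod 2) {v}) * (C ⊔ Submodule.span (ZMod 2) {v})) := by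
  set S := Submodule.span (ZMod 2) {v}
  have hS : S ≤ dualCode (C * C) := (Submodule.span_singleton_le_iff_mem v _).2 hv
  have hCS : C ≤ dualCode (S * C) := le_dualCode_mul_comm.2 hS
  have hSS : C ≤ dualCode (S * S) := by
    rw [span_singleton_mul_self, le_dualCode_comm]
    exact hS.trans (dualCode_antitone (self_le_mul_self C))
  rw [Submodule.sup_mul, Submodule.mul_sup, Submodule.mul_sup, le_dualCode_sup_iff,
    le_dualCode_sup_iff, le_dualCode_sup_iff, Submodule.mul_comm C S]
  exact ⟨⟨hC, hCS⟩, hCS, hSS⟩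

lemma mul_self_eq_dualCode_of_maximal (hC : IsCSST C C)
    (hmax : ∀ D, IsCSST D C → C ≤ D → D = C) : C * C = dualCode C := by
  have hCC : C ≤ dualCode (C * C) := (isCSST_iff.1 hC).2
  suffices dualCode (C * C) = C by rw [← dualCode_dualCode (C * C), this]
  refine le_antisymm (fun v hv => ?_) hCC
  have hD : IsCSST (C ⊔ Submodule.span (ZMod 2) {v}) C :=
    isCSST_iff.2 ⟨le_sup_left, le_dualCode_mul_self_sup_span_singleton hCC hv⟩
  rw [← hmax _ hD le_sup_left]
  exact Submodule.mem_sup_right (Submodule.mem_span_singleton_self v)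

lemma eq_of_isCSST_of_mul_self_eq_dualCode (hC : C * C = dualCode C) (hD : IsCSST A B)
    (hA : C ≤ A) (hB : C ≤ B) : A = C ∧ B = C := by
  have hdual : dualCode (C * C) = C := by rw [hC, dualCode_dualCode]
  have hBA : B ≤ dualCode (A * A) := (isCSST_iff.1 hD).2
  have hAA : dualCode (A * A) ≤ C := (dualCode_antitone (mul_le_mul' hA hA)).trans hdual.le
  have hCA : dualCode (C * A) ≤ C := (dualCode_antitone (mul_le_mul' le_rfl hA)).trans hdual.le
  have hAC : A ≤ dualCode (C * A) := le_dualCode_mul_comm.1 (hB.trans hBA)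
  exact ⟨le_antisymm (hAC.trans hCA) hA, le_antisymm (hBA.trans hAA) hB⟩

end BinaryCode

theorem stmt_12 (n : ℕ) (C : Submodule (ZMod 2) (Fin n → ZMod 2)) (hC : C ≠ ⊥) :
    (IsCSST C C ∧
      ∀ D₁ D₂ : Submodule (ZMod 2) (Fin n → ZMod 2),
        IsCSST D₁ D₂ → D₂ ≠ ⊥ → C ≤ D₁ → C ≤ D₂ → D₁ = C ∧ D₂ = C)
    ↔ schur C C = dualCode C := by
  rw [schur_eq_mul]
  constructor
  · rintro ⟨hCC, hmax⟩
    exact mul_self_eq_dualCode_of_maximal hCC fun D hD hCD => (hmax D C hD hC hCD le_rfl).1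
  · intro h
    refine ⟨isCSST_iff.2 ⟨le_rfl, ?_⟩, fun D₁ D₂ hD _ h₁ h₂ =>
      eq_of_isCSST_of_mul_self_eq_dualCode h hD h₁ h₂⟩
    rw [h, dualCode_dualCode]
end
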